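/- Let X and Y be metric spaces, let K and L be simplicial complexes with vertex sets X and Y respectively, and let f : X → Y be a continuous map whose image has finite diameter, such that the induced map f̃ : K^m → L^m on metric thickenings exists (f̃(Σ λ_i δ_{x_i}) = Σ λ_i δ_{f(x_i)}). Then f̃ is continuous with respect to the 1-Wasserstein metrics. -/

import Mathlib

open MeasureTheory
open scoped ENNReal

noncomputable section

/-- An (abstract) simplicial complex whose vertex set is all of `X`. -/
structure SimpComplex (X : Type*) where
  faces : Set (Finset X)
  singleton_mem : ∀ x : X, {x} ∈ faces
  down_closed : ∀ s ∈ faces, ∀ t : Finset X, t ⊆ s → t.Nonempty → t ∈ faces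

/-- The metric thickening `K^m` of a simplicial complex `K` with vertex set `X`:
all finitely supported probability measures on `X` whose support is a simplex of `K`. -/
def thick {X : Type*} [MeasurableSpace X] (K : SimpComplex X) : Set (Measure X) :=
  {μ | ∃ (s : Finset X) (w : X → ℝ), s ∈ K.faces ∧ (∀ x ∈ s, 0 < w x) ∧
    (∑ x ∈ s, w x) = 1 ∧ μ = ∑ x ∈ s, ENNReal.ofReal (w x) • Measure.dirac x}

/-- The set of transport plans (couplings) between two measures. -/
def couplings {X : Type*} [MeasurableSpace X] (μ ν : Measure X) : Set (Measure (X × X)) :=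
  {π | π.map Prod.fst = μ ∧ π.map Prod.snd = ν}

/-- The 1-Wasserstein (optimal transport) distance between two measures on a metric space. -/
def W1 {X : Type*} [MetricSpace X] [MeasurableSpace X] (μ ν : Measure X) : ℝ≥0∞ :=
  ⨅ π ∈ couplings μ ν, ∫⁻ p, edist p.1 p.2 ∂π

/-- The topology on measures induced by the 1-Wasserstein distance (generated by W1-balls). -/
def W1Top (X : Type*) [MetricSpace X] [MeasurableSpace X] : TopologicalSpace (Measure X) :=
  TopologicalSpace.generateFrom
    {B | ∃ (μ : Measure X) (ε : ℝ), 0 < ε ∧ B = {ν | W1 μ ν < ENNReal.ofReal ε}}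

/-!
Fix `μ₀ = ∑ λᵢ δ_{xᵢ}` in `K^m`. Continuity of `f` at the finitely many atoms `xᵢ`, together with
`diam f(X) < ∞`, gives for every `η > 0` one constant `C` with `d(f xᵢ, f x') ≤ η + C d(xᵢ, x')`
for all `x'`. Pushing a transport plan from `μ₀` to `μ` forward by `f × f` then shows
`W₁(f♯μ₀, f♯μ) ≤ η + C W₁(μ₀, μ)`.

The Wasserstein topology is generated by balls around arbitrary measures, so one also needs the
triangle inequality `W₁(ν, f♯μ) ≤ W₁(ν, f♯μ₀) + W₁(f♯μ₀, f♯μ)`. Since `f♯μ₀` has finitely many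
atoms, two plans through it can be glued atom by atom, as products of their fibres, without any
disintegration theorem.
-/

open Set Metric

section Measures

variable {Z W : Type*} [MeasurableSpace Z] [MeasurableSpace W]

lemma inv_smul_smul_of_measure_univ {α : Measure Z} {c : ℝ≥0∞} (hc : c ≠ ∞)
    (hα : α univ = c) : c⁻¹ • c • α = α := by
  rcases eq_or_ne c 0 with rfl | hc0
  · simp [Measure.measure_univ_eq_zero.1 hα]
  · rw [smul_smul, ENNReal.inv_mul_cancel hc0 hc, one_smul]

lemma map_compl_image_eq_zero [MeasurableSingletonClass W] [DecidableEq W] {f : Z → W}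
    (hf : Measurable f) {μ : Measure Z} {t : Finset Z} (ht : μ (↑t)ᶜ = 0) :
    μ.map f (↑(t.image f))ᶜ = 0 := by
  rw [Measure.map_apply hf (Finset.measurableSet _).compl]
  exact measure_mono_null (fun x hx hxt => hx (Finset.mem_image_of_mem f hxt)) ht

end Measures

section Couplings

variable {Z W : Type*} [MeasurableSpace Z] [MeasurableSpace W]

lemma isFiniteMeasure_of_mem_couplings_left {μ ν : Measure Z} [IsFiniteMeasure μ]
    {π : Measure (Z × Z)} (hπ : π ∈ couplings μ ν) : IsFiniteMeasure π :=
  have : IsFiniteMeasure (π.map Prod.fst) := hπ.1 ▸ inferInstance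
  Measure.isFiniteMeasure_of_map measurable_fst.aemeasurable

lemma isFiniteMeasure_of_mem_couplings_right {μ ν : Measure Z} [IsFiniteMeasure ν]
    {π : Measure (Z × Z)} (hπ : π ∈ couplings μ ν) : IsFiniteMeasure π :=
  have : IsFiniteMeasure (π.map Prod.snd) := hπ.2 ▸ inferInstance
  Measure.isFiniteMeasure_of_map measurable_snd.aemeasurable

lemma map_prodMap_mem_couplings {f : Z → W} (hf : Measurable f) {μ ν : Measure Z}
    {π : Measure (Z × Z)} (hπ : π ∈ couplings μ ν) :
    π.map (Prod.map f f) ∈ couplings (μ.map f) (ν.map f) := by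
  constructor
  · rw [Measure.map_map measurable_fst (hf.prodMap hf), ← hπ.1, Measure.map_map hf measurable_fst]
    rfl
  · rw [Measure.map_map measurable_snd (hf.prodMap hf), ← hπ.2, Measure.map_map hf measurable_snd]
    rfl

lemma map_diag_mem_couplings (μ : Measure Z) : μ.map (fun z => (z, z)) ∈ couplings μ μ := by
  constructor <;> rw [Measure.map_map (by fun_prop) (by fun_prop)] <;> exact Measure.map_id

end Couplings

section W1

variable {Z W : Type*} [MeasurableSpace Z] [MetricSpace W] [MeasurableSpace W]

lemma W1_le_lintegral {μ ν : Measure W} {π : Measure (W × W)} (hπ : π ∈ couplings μ ν) :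
    W1 μ ν ≤ ∫⁻ p, edist p.1 p.2 ∂π :=
  iInf₂_le π hπ

lemma W1_map_le_lintegral {f : Z → W} (hf : Measurable f) {μ ν : Measure Z}
    {π : Measure (Z × Z)} (hπ : π ∈ couplings μ ν) :
    W1 (μ.map f) (ν.map f) ≤ ∫⁻ p, edist (f p.1) (f p.2) ∂π :=
  (W1_le_lintegral (map_prodMap_mem_couplings hf hπ)).trans (lintegral_map_le _ _)

@[simp]
lemma W1_self (μ : Measure W) : W1 μ μ = 0 :=
  le_antisymm ((W1_le_lintegral (map_diag_mem_couplings μ)).trans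
    ((lintegral_map_le _ _).trans (by simp))) zero_le

lemma lintegral_edist_le_map_fst_add_map_snd [OpensMeasurableSpace W] (π : Measure (W × W))
    (y : W) :
    ∫⁻ p, edist p.1 p.2 ∂π
      ≤ ∫⁻ a, edist a y ∂(π.map Prod.fst) + ∫⁻ b, edist y b ∂(π.map Prod.snd) := by
  rw [lintegral_map (by fun_prop) measurable_fst, lintegral_map (by fun_prop) measurable_snd,
    ← lintegral_add_left (by fun_prop)]
  exact lintegral_mono fun p => edist_triangle _ _ _

end W1

section Fibers

variable {α Y : Type*} [MeasurableSpace α] [MeasurableSpace Y] [MeasurableSingletonClass Y]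

lemma sum_restrict_preimage_singleton {π : Measure α} {g : α → Y} (hg : Measurable g)
    {s : Finset Y} (hs : π.map g (↑s)ᶜ = 0) :
    ∑ y ∈ s, π.restrict (g ⁻¹' {y}) = π := by
  rw [← Measure.sum_coe_finset, ← Measure.restrict_biUnion_finset (pairwiseDisjoint_fiber g ↑s)
    (fun y => hg (measurableSet_singleton y)), Finset.set_biUnion_preimage_singleton]
  refine Measure.restrict_eq_self_of_ae_mem (ae_iff.2 ?_)
  rwa [Measure.map_apply hg s.measurableSet.compl] at hs

lemma sum_setLIntegral_preimage_singleton {π : Measure α} {g : α → Y} (hg : Measurable g)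
    {s : Finset Y} (hs : π.map g (↑s)ᶜ = 0) (F : α → ℝ≥0∞) :
    ∑ y ∈ s, ∫⁻ a in g ⁻¹' {y}, F a ∂π = ∫⁻ a, F a ∂π := by
  rw [← lintegral_finsetSum_measure, sum_restrict_preimage_singleton hg hs]

end Fibers

section Gluing

variable {Y : Type*} [MeasurableSpace Y]

def arrivingAt (π : Measure (Y × Y)) (y : Y) : Measure Y :=
  (π.restrict (Prod.snd ⁻¹' {y})).map Prod.fst

def leavingFrom (π : Measure (Y × Y)) (y : Y) : Measure Y :=
  (π.restrict (Prod.fst ⁻¹' {y})).map Prod.snd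

variable [MeasurableSingletonClass Y] {s : Finset Y}

lemma arrivingAt_univ (π : Measure (Y × Y)) (y : Y) :
    arrivingAt π y univ = π.map Prod.snd {y} := by
  rw [arrivingAt, Measure.map_apply measurable_fst .univ, preimage_univ,
    Measure.restrict_apply_univ, Measure.map_apply measurable_snd (measurableSet_singleton y)]

lemma leavingFrom_univ (π : Measure (Y × Y)) (y : Y) :
    leavingFrom π y univ = π.map Prod.fst {y} := by
  rw [leavingFrom, Measure.map_apply measurable_snd .univ, preimage_univ,
    Measure.restrict_apply_univ, Measure.map_apply measurable_fst (measurableSet_singleton y)]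

lemma sum_arrivingAt {π : Measure (Y × Y)} (hs : π.map Prod.snd (↑s)ᶜ = 0) :
    ∑ y ∈ s, arrivingAt π y = π.map Prod.fst := by
  simp only [arrivingAt]
  rw [← Measure.map_finset_sum measurable_fst.aemeasurable,
    sum_restrict_preimage_singleton measurable_snd hs]

lemma sum_leavingFrom {π : Measure (Y × Y)} (hs : π.map Prod.fst (↑s)ᶜ = 0) :
    ∑ y ∈ s, leavingFrom π y = π.map Prod.snd := by
  simp only [leavingFrom]
  rw [← Measure.map_finset_sum measurable_snd.aemeasurable,
    sum_restrict_preimage_singleton measurable_fst hs]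

/-- Glue `π₁` and `π₂` along the atoms `y ∈ s` of their common marginal `m`: the mass that `π₁`
brings to `y` is sent on by `π₂`, independently of where it came from. -/
def gluePlan (m : Measure Y) (s : Finset Y) (π₁ π₂ : Measure (Y × Y)) : Measure (Y × Y) :=
  ∑ y ∈ s, (m {y})⁻¹ • (arrivingAt π₁ y).prod (leavingFrom π₂ y)

instance (π : Measure (Y × Y)) [IsFiniteMeasure π] (y : Y) :
    IsFiniteMeasure (arrivingAt π y) := by
  unfold arrivingAt; infer_instance

instance (π : Measure (Y × Y)) [IsFiniteMeasure π] (y : Y) :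
    IsFiniteMeasure (leavingFrom π y) := by
  unfold leavingFrom; infer_instance

variable {m ν ρ : Measure Y} [IsFiniteMeasure m] {π₁ π₂ : Measure (Y × Y)}

lemma map_fst_gluePlan_term (h₁ : π₁ ∈ couplings ν m) (h₂ : π₂ ∈ couplings m ρ) (y : Y) :
    ((m {y})⁻¹ • (arrivingAt π₁ y).prod (leavingFrom π₂ y)).map Prod.fst = arrivingAt π₁ y := by
  have := isFiniteMeasure_of_mem_couplings_right h₁
  have := isFiniteMeasure_of_mem_couplings_left h₂
  rw [Measure.map_smul, Measure.map_fst_prod, leavingFrom_univ, h₂.1]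
  exact inv_smul_smul_of_measure_univ (measure_ne_top m _) (by rw [arrivingAt_univ, h₁.2])

lemma map_snd_gluePlan_term (h₁ : π₁ ∈ couplings ν m) (h₂ : π₂ ∈ couplings m ρ) (y : Y) :
    ((m {y})⁻¹ • (arrivingAt π₁ y).prod (leavingFrom π₂ y)).map Prod.snd = leavingFrom π₂ y := by
  have := isFiniteMeasure_of_mem_couplings_right h₁
  have := isFiniteMeasure_of_mem_couplings_left h₂
  rw [Measure.map_smul, Measure.map_snd_prod, arrivingAt_univ, h₁.2]
  exact inv_smul_smul_of_measure_univ (measure_ne_top m _) (by rw [leavingFrom_univ, h₂.1])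

lemma gluePlan_mem_couplings (hs : m (↑s)ᶜ = 0) (h₁ : π₁ ∈ couplings ν m)
    (h₂ : π₂ ∈ couplings m ρ) : gluePlan m s π₁ π₂ ∈ couplings ν ρ := by
  constructor
  · rw [gluePlan, Measure.map_finset_sum measurable_fst.aemeasurable, ← h₁.1,
      ← sum_arrivingAt (h₁.2 ▸ hs)]
    exact Finset.sum_congr rfl fun y _ => map_fst_gluePlan_term h₁ h₂ y
  · rw [gluePlan, Measure.map_finset_sum measurable_snd.aemeasurable, ← h₂.2,
      ← sum_leavingFrom (h₂.1 ▸ hs)]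
    exact Finset.sum_congr rfl fun y _ => map_snd_gluePlan_term h₁ h₂ y

variable [MetricSpace Y] [OpensMeasurableSpace Y]

lemma lintegral_edist_arrivingAt (π : Measure (Y × Y)) (y : Y) :
    ∫⁻ a, edist a y ∂(arrivingAt π y) = ∫⁻ p in Prod.snd ⁻¹' {y}, edist p.1 p.2 ∂π := by
  rw [arrivingAt, lintegral_map (by fun_prop) measurable_fst]
  exact setLIntegral_congr_fun (measurable_snd (measurableSet_singleton y))
    fun p hp => by rw [mem_singleton_iff.1 hp]

lemma lintegral_edist_leavingFrom (π : Measure (Y × Y)) (y : Y) :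
    ∫⁻ b, edist y b ∂(leavingFrom π y) = ∫⁻ p in Prod.fst ⁻¹' {y}, edist p.1 p.2 ∂π := by
  rw [leavingFrom, lintegral_map (by fun_prop) measurable_snd]
  exact setLIntegral_congr_fun (measurable_fst (measurableSet_singleton y))
    fun p hp => by rw [mem_singleton_iff.1 hp]

lemma lintegral_edist_gluePlan_le (hs : m (↑s)ᶜ = 0) (h₁ : π₁ ∈ couplings ν m)
    (h₂ : π₂ ∈ couplings m ρ) :
    ∫⁻ p, edist p.1 p.2 ∂(gluePlan m s π₁ π₂)
      ≤ ∫⁻ p, edist p.1 p.2 ∂π₁ + ∫⁻ p, edist p.1 p.2 ∂π₂ := by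
  rw [gluePlan, lintegral_finsetSum_measure,
    ← sum_setLIntegral_preimage_singleton measurable_snd (h₁.2 ▸ hs),
    ← sum_setLIntegral_preimage_singleton measurable_fst (h₂.1 ▸ hs), ← Finset.sum_add_distrib]
  refine Finset.sum_le_sum fun y _ => (lintegral_edist_le_map_fst_add_map_snd _ y).trans_eq ?_
  rw [map_fst_gluePlan_term h₁ h₂, map_snd_gluePlan_term h₁ h₂, lintegral_edist_arrivingAt,
    lintegral_edist_leavingFrom]

lemma W1_triangle_of_finite_support (hs : m (↑s)ᶜ = 0) (ν ρ : Measure Y) :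
    W1 ν ρ ≤ W1 ν m + W1 m ρ := by
  simp only [W1, ENNReal.iInf_add, ENNReal.add_iInf]
  exact le_iInf₂ fun π₂ h₂ => le_iInf₂ fun π₁ h₁ => iInf₂_le_of_le _
    (gluePlan_mem_couplings hs h₁ h₂) (lintegral_edist_gluePlan_le hs h₁ h₂)

end Gluing

section Pushforward

variable {X Y : Type*}

lemma exists_edist_le_add_mul_edist [PseudoEMetricSpace X] [PseudoEMetricSpace Y] {f : X → Y}
    {t : Finset X} (hf : ∀ x ∈ t, ContinuousAt f x) (hbdd : ediam (range f) ≠ ∞)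
    {η : ℝ≥0∞} (hη : η ≠ 0) :
    ∃ C ≠ ∞, ∀ x ∈ t, ∀ x', edist (f x) (f x') ≤ η + C * edist x x' := by
  have hmod : ∀ x ∈ t, ∃ d > 0, ∀ ⦃x'⦄, edist x' x < d → edist (f x') (f x) < η :=
    fun x hx => EMetric.continuousAt_iff.1 (hf x hx) η (pos_iff_ne_zero.2 hη)
  choose! d hd0 hd using hmod
  set δ := t.inf d ⊓ 1
  have hδ0 : δ ≠ 0 := (lt_min (Finset.lt_inf_iff ENNReal.zero_lt_top |>.2 hd0) one_pos).ne'
  have hδtop : δ ≠ ∞ := ne_top_of_le_ne_top ENNReal.one_ne_top inf_le_right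
  refine ⟨ediam (range f) / δ, ENNReal.div_ne_top hbdd hδ0, fun x hx x' => ?_⟩
  by_cases hnear : edist x x' < δ
  · have hx' : edist x' x < d x := by
      rw [edist_comm]; exact hnear.trans_le (inf_le_left.trans (Finset.inf_le hx))
    rw [edist_comm]
    exact (hd x hx hx').le.trans le_self_add
  · calc edist (f x) (f x') ≤ ediam (range f) :=
          edist_le_ediam_of_mem (mem_range_self _) (mem_range_self _)
      _ = ediam (range f) / δ * δ := (ENNReal.div_mul_cancel hδ0 hδtop).symm
      _ ≤ ediam (range f) / δ * edist x x' := by gcongr; exact not_lt.1 hnear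
      _ ≤ η + ediam (range f) / δ * edist x x' := le_add_self

variable [MetricSpace X] [MeasurableSpace X] [MetricSpace Y] [MeasurableSpace Y]

lemma W1_map_le_add_mul {f : X → Y} (hf : Measurable f) {μ₀ μ : Measure X} {t : Finset X}
    (ht : μ₀ (↑t)ᶜ = 0) {η C : ℝ≥0∞} (hC : C ≠ ∞)
    (hfC : ∀ x ∈ t, ∀ x', edist (f x) (f x') ≤ η + C * edist x x')
    {π : Measure (X × X)} (hπ : π ∈ couplings μ₀ μ) :
    W1 (μ₀.map f) (μ.map f) ≤ η * μ₀ univ + C * ∫⁻ p, edist p.1 p.2 ∂π := by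
  have hfst : ∀ᵐ p ∂π, p.1 ∈ t :=
    ae_of_ae_map measurable_fst.aemeasurable (hπ.1 ▸ ae_iff.2 ht)
  calc W1 (μ₀.map f) (μ.map f) ≤ ∫⁻ p, edist (f p.1) (f p.2) ∂π := W1_map_le_lintegral hf hπ
    _ ≤ ∫⁻ p, η + C * edist p.1 p.2 ∂π := lintegral_mono_ae (hfst.mono fun p hp => hfC _ hp _)
    _ = η * μ₀ univ + C * ∫⁻ p, edist p.1 p.2 ∂π := by
      rw [lintegral_add_left measurable_const, lintegral_const, lintegral_const_mul' _ _ hC,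
        ← hπ.1, Measure.map_apply measurable_fst .univ, preimage_univ]

lemma exists_W1_map_lt [OpensMeasurableSpace X] [BorelSpace Y] {f : X → Y} (hf : Continuous f)
    (hbdd : ediam (range f) ≠ ∞) {μ₀ : Measure X} [IsFiniteMeasure μ₀] {t : Finset X}
    (ht : μ₀ (↑t)ᶜ = 0) {r : ℝ≥0∞} (hr : r ≠ 0) :
    ∃ δ > 0, ∀ μ, W1 μ₀ μ < δ → W1 (μ₀.map f) (μ.map f) < r := by
  have hr2 : r / 2 ≠ 0 := (ENNReal.half_pos hr).ne'
  obtain ⟨η, hη0, hη⟩ := ENNReal.exists_pos_mul_lt (measure_ne_top μ₀ univ) hr2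
  obtain ⟨C, hC, hfC⟩ := exists_edist_le_add_mul_edist (fun x _ => hf.continuousAt) hbdd hη0.ne'
  obtain ⟨δ, hδ0, hδ⟩ := ENNReal.exists_pos_mul_lt hC hr2
  refine ⟨δ, hδ0, fun μ hμ => ?_⟩
  obtain ⟨π, hπ, hcost⟩ : ∃ π ∈ couplings μ₀ μ, ∫⁻ p, edist p.1 p.2 ∂π < δ := by
    simpa only [W1, iInf_lt_iff, exists_prop] using hμ
  calc W1 (μ₀.map f) (μ.map f) ≤ η * μ₀ univ + C * ∫⁻ p, edist p.1 p.2 ∂π :=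
        W1_map_le_add_mul hf.measurable ht hC hfC hπ
    _ < r / 2 + r / 2 := by
        refine ENNReal.add_lt_add hη (lt_of_le_of_lt ?_ (mul_comm δ C ▸ hδ))
        gcongr
    _ = r := ENNReal.add_halves r

end Pushforward

section Thickening

variable {X : Type*} [MeasurableSpace X] [MeasurableSingletonClass X] {K : SimpComplex X}
  {μ : Measure X}

omit [MeasurableSingletonClass X] in
lemma isFiniteMeasure_of_mem_thick (hμ : μ ∈ thick K) : IsFiniteMeasure μ := by
  obtain ⟨t, w, -, -, -, rfl⟩ := hμ
  exact ⟨by simp [Measure.finsetSum_apply, ENNReal.sum_lt_top]⟩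

lemma exists_finset_measure_compl_eq_zero_of_mem_thick (hμ : μ ∈ thick K) :
    ∃ t : Finset X, μ (↑t)ᶜ = 0 := by
  obtain ⟨t, w, -, -, -, rfl⟩ := hμ
  refine ⟨t, ?_⟩
  rw [Measure.finsetSum_apply]
  exact Finset.sum_eq_zero fun x hx => by simp [hx]

end Thickening

lemma continuousWithinAt_W1Top {X Y : Type*} [MetricSpace X] [MeasurableSpace X] [MetricSpace Y]
    [MeasurableSpace Y] [OpensMeasurableSpace Y] {F : Measure X → Measure Y}
    {S : Set (Measure X)} {μ₀ : Measure X} [IsFiniteMeasure (F μ₀)] {s : Finset Y}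
    (hs : F μ₀ (↑s)ᶜ = 0) (hF : ∀ r ≠ 0, ∃ δ > 0, ∀ μ, W1 μ₀ μ < δ → W1 (F μ₀) (F μ) < r) :
    @ContinuousWithinAt _ _ (W1Top X) (W1Top Y) F S μ₀ := by
  let := W1Top X
  refine TopologicalSpace.tendsto_nhds_generateFrom_iff.2 ?_
  rintro _ ⟨ν, ε, -, rfl⟩ hν
  obtain ⟨r, hr, hlt⟩ := ENNReal.lt_iff_exists_add_pos_lt.1 hν
  obtain ⟨δ, hδ, hμδ⟩ := hF r (by exact_mod_cast hr.ne')
  obtain ⟨δ', -, hδ'0, hδ'δ⟩ := ENNReal.lt_iff_exists_real_btwn.1 hδ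
  refine mem_nhdsWithin.2 ⟨{μ | W1 μ₀ μ < ENNReal.ofReal δ'},
    .basic _ ⟨μ₀, δ', ENNReal.ofReal_pos.1 hδ'0, rfl⟩, by simpa using hδ'0, fun μ hμ => ?_⟩
  calc W1 ν (F μ) ≤ W1 ν (F μ₀) + W1 (F μ₀) (F μ) := W1_triangle_of_finite_support hs ν (F μ)
    _ < ENNReal.ofReal ε := (add_le_add le_rfl (hμδ μ (hμ.1.trans hδ'δ)).le).trans_lt hlt

theorem stmt3_general {X Y : Type*} [MetricSpace X] [MetricSpace Y]
    [MeasurableSpace X] [BorelSpace X] [MeasurableSpace Y] [BorelSpace Y]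
    (K : SimpComplex X) (f : X → Y) (hf : Continuous f)
    (hbdd : EMetric.diam (Set.range f) ≠ ⊤) :
    @ContinuousOn (Measure X) (Measure Y) (W1Top X) (W1Top Y)
      (fun μ => μ.map f) (thick K) := by
  classical
  intro μ₀ hμ₀
  have := isFiniteMeasure_of_mem_thick hμ₀
  obtain ⟨t, ht⟩ := exists_finset_measure_compl_eq_zero_of_mem_thick hμ₀
  exact continuousWithinAt_W1Top (map_compl_image_eq_zero hf.measurable ht)
    fun r hr => exists_W1_map_lt hf hbdd ht hr

/-- If `X`, `Y` are metric spaces, `K`, `L` are simplicial complexes with vertex sets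
`X`, `Y`, and `f : X → Y` is continuous with image of finite diameter and induces a map of
metric thickenings `K^m → L^m` (the pushforward of every measure of `K^m` lies in `L^m`),
then the induced map is continuous with respect to the 1-Wasserstein topologies. -/
theorem stmt3 {X Y : Type*} [MetricSpace X] [MetricSpace Y]
    [MeasurableSpace X] [BorelSpace X] [MeasurableSpace Y] [BorelSpace Y]
    (K : SimpComplex X) (L : SimpComplex Y) (f : X → Y) (hf : Continuous f)
    (hbdd : EMetric.diam (Set.range f) ≠ ⊤)
    (hind : ∀ μ ∈ thick K, μ.map f ∈ thick L) :
    @ContinuousOn (Measure X) (Measure Y) (W1Top X) (W1Top Y)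
      (fun μ => μ.map f) (thick K) :=
  stmt3_general K f hf hbdd

end
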